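/- (Uniqueness of solutions of the μ-flow equation.) In the finite MDP setting with weights η : ℕ → ℝ, η(k) ≥ 0, ∑_k η(k) = 1, let π be a policy and let f : S → S × A → ℝ be nonnegative and satisfy, for all s₀, s, a: f(s₀)(s,a) = π s a · ( ∑_{a'} P^η_π((s,a')|s₀) + γ · ∑_{(s',a')} f(s₀)(s',a') · 𝒫(s',a')(s) ). Then f(s₀)(s,a) = μ_π((s,a)|s₀) for all s₀, s, a. -/

import Mathlib

open scoped BigOperators Classical

/-- `n`-step state–action distribution of the stationary policy `π` started at a state. -/
noncomputable def PstepS {S A : Type*} [Fintype S] [Fintype A]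
    (P : S × A → PMF S) (π : S → PMF A) : ℕ → S → S × A → ℝ
  | 0, s₀, x => if x.1 = s₀ then (π x.1 x.2).toReal else 0
  | n + 1, s₀, x => ∑ y : S × A, PstepS P π n s₀ y * (P y x.1).toReal * (π x.1 x.2).toReal

/-- `n`-step state–action distribution of `π` started at a state–action pair. -/
noncomputable def PstepSA {S A : Type*} [Fintype S] [Fintype A]
    (P : S × A → PMF S) (π : S → PMF A) : ℕ → S × A → S × A → ℝ
  | 0, y, x => if x = y then 1 else 0
  | n + 1, y, x => ∑ z : S × A, PstepSA P π n y z * (P z x.1).toReal * (π x.1 x.2).toReal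

/-- η-weighted future state distribution, started at a state. -/
noncomputable def PetaS {S A : Type*} [Fintype S] [Fintype A]
    (P : S × A → PMF S) (π : S → PMF A) (η : ℕ → ℝ) (s₀ : S) (x : S × A) : ℝ :=
  ∑' k, η k * PstepS P π k s₀ x

/-- η-weighted future state distribution, started at a state–action pair. -/
noncomputable def PetaSA {S A : Type*} [Fintype S] [Fintype A]
    (P : S × A → PMF S) (π : S → PMF A) (η : ℕ → ℝ) (y : S × A) (x : S × A) : ℝ :=
  ∑' k, η k * PstepSA P π k y x

/-- γ-discounted occupancy measure, started at a state. -/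
noncomputable def rhoS {S A : Type*} [Fintype S] [Fintype A]
    (P : S × A → PMF S) (π : S → PMF A) (γ : ℝ) (s₀ : S) (x : S × A) : ℝ :=
  ∑' t, γ ^ t * PstepS P π t s₀ x

/-- γ-discounted occupancy measure, started at a state–action pair. -/
noncomputable def rhoSA {S A : Type*} [Fintype S] [Fintype A]
    (P : S × A → PMF S) (π : S → PMF A) (γ : ℝ) (y : S × A) (x : S × A) : ℝ :=
  ∑' t, γ ^ t * PstepSA P π t y x

/-- η-weighted, γ-discounted future occupancy measure `μ_π`. -/
noncomputable def muS {S A : Type*} [Fintype S] [Fintype A]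
    (P : S × A → PMF S) (π : S → PMF A) (γ : ℝ) (η : ℕ → ℝ) (s₀ : S) (x : S × A) : ℝ :=
  ∑' t, ∑' k, γ ^ t * η k * PstepS P π (t + k) s₀ x

/-!
`μ_π(·|s₀)` solves the flow equation: the `t = 0` part of its defining double series is
`P^η_π(·|s₀)`, which like every `P^n_π` factors as `π s a · ∑_{a'} P^η_π((s, a')|s₀)`; and
since `P^{n+1}_π = T P^n_π` for the one-step transfer operator
`T d (s, a) = π s a · ∑_y d y · 𝒫 y s`, the shifted part is `γ · T μ_π(·|s₀)`.
The difference `d` of two solutions satisfies `d = γ T d`; as `T` preserves total mass and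
`|T d| ≤ T |d|`, this gives `‖d‖₁ ≤ γ ‖d‖₁`, hence `d = 0`.
-/

open Finset

lemma PMF.sum_toReal_eq_one {B : Type*} [Fintype B] (p : PMF B) : ∑ b, (p b).toReal = 1 := by
  rw [← ENNReal.toReal_sum fun b _ => p.apply_ne_top b,
    ← tsum_fintype (L := SummationFilter.unconditional B), p.tsum_coe, ENNReal.toReal_one]

section Transfer

variable {S A : Type*} [Fintype S] [Fintype A] (P : S × A → PMF S) (π : S → PMF A)

noncomputable def transfer (d : S × A → ℝ) (x : S × A) : ℝ :=
  (π x.1 x.2).toReal * ∑ y, d y * (P y x.1).toReal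

variable {P π}

lemma transfer_nonneg {d : S × A → ℝ} (hd : ∀ y, 0 ≤ d y) (x : S × A) :
    0 ≤ transfer P π d x :=
  mul_nonneg ENNReal.toReal_nonneg <| sum_nonneg fun y _ => mul_nonneg (hd y) ENNReal.toReal_nonneg

lemma transfer_const_mul (c : ℝ) (d : S × A → ℝ) (x : S × A) :
    transfer P π (fun y => c * d y) x = c * transfer P π d x := by
  simp only [transfer, mul_sum]
  exact sum_congr rfl fun y _ => by ring

lemma transfer_tsum {ι : Type*} {F : ι → S × A → ℝ} (hF : ∀ y, Summable fun i => F i y)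
    (x : S × A) : transfer P π (fun y => ∑' i, F i y) x = ∑' i, transfer P π (F i) x := by
  simp only [transfer, tsum_mul_left]
  rw [Summable.tsum_finsetSum fun y _ => (hF y).mul_right _]
  simp only [tsum_mul_right]

lemma transfer_eq_mul_sum (d : S × A → ℝ) (s : S) (a : A) :
    transfer P π d (s, a) = (π s a).toReal * ∑ a', transfer P π d (s, a') := by
  simp only [transfer, ← sum_mul, PMF.sum_toReal_eq_one, one_mul]

lemma sum_transfer (d : S × A → ℝ) : ∑ x, transfer P π d x = ∑ x, d x := by
  calc ∑ x, transfer P π d x = ∑ s, ∑ y, d y * (P y s).toReal := by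
        simp only [transfer, Fintype.sum_prod_type, ← sum_mul, PMF.sum_toReal_eq_one, one_mul]
    _ = ∑ y, d y := by
        rw [sum_comm]
        simp only [← mul_sum, PMF.sum_toReal_eq_one, mul_one]

lemma sum_abs_transfer_le (d : S × A → ℝ) : ∑ x, |transfer P π d x| ≤ ∑ x, |d x| := by
  have habs : ∀ x, |transfer P π d x| ≤ transfer P π (fun y => |d y|) x := fun x => by
    simp only [transfer, abs_mul, abs_of_nonneg ENNReal.toReal_nonneg]
    gcongr
    refine (abs_sum_le_sum_abs _ _).trans_eq (sum_congr rfl fun y _ => ?_)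
    rw [abs_mul, abs_of_nonneg ENNReal.toReal_nonneg]
  exact (sum_le_sum fun x _ => habs x).trans_eq (sum_transfer _)

lemma eq_zero_of_eq_mul_transfer {γ : ℝ} (hγ : |γ| < 1) {d : S × A → ℝ}
    (hd : ∀ x, d x = γ * transfer P π d x) : d = 0 := by
  have hle : ∑ x, |d x| ≤ |γ| * ∑ x, |d x| := calc
    ∑ x, |d x| = |γ| * ∑ x, |transfer P π d x| := by
      rw [mul_sum]
      exact sum_congr rfl fun x _ => by rw [← abs_mul, ← hd]
    _ ≤ |γ| * ∑ x, |d x| := mul_le_mul_of_nonneg_left (sum_abs_transfer_le d) (abs_nonneg γ)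
  have hnorm : ∑ x, |d x| = 0 := by
    nlinarith [sum_nonneg fun x (_ : x ∈ univ) => abs_nonneg (d x)]
  funext x
  exact abs_eq_zero.mp <|
    (sum_eq_zero_iff_of_nonneg fun y _ => abs_nonneg (d y)).mp hnorm x (mem_univ x)

lemma eq_of_flow {γ : ℝ} (hγ : |γ| < 1) (b : S → ℝ) {f g : S × A → ℝ}
    (hf : ∀ s a, f (s, a) = (π s a).toReal * (b s + γ * ∑ y, f y * (P y s).toReal))
    (hg : ∀ s a, g (s, a) = (π s a).toReal * (b s + γ * ∑ y, g y * (P y s).toReal)) :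
    f = g := by
  refine sub_eq_zero.mp <| eq_zero_of_eq_mul_transfer (P := P) (π := π) hγ fun ⟨s, a⟩ => ?_
  simp only [transfer, Pi.sub_apply, hf s a, hg s a, sub_mul, sum_sub_distrib]
  ring

end Transfer

section Occupancy

variable {S A : Type*} [Fintype S] [Fintype A] (P : S × A → PMF S) (π : S → PMF A)

lemma PstepS_succ (n : ℕ) (s₀ : S) : PstepS P π (n + 1) s₀ = transfer P π (PstepS P π n s₀) := by
  funext x
  rw [transfer, mul_comm, sum_mul]
  rfl

lemma PstepS_nonneg (n : ℕ) (s₀ : S) (x : S × A) : 0 ≤ PstepS P π n s₀ x := by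
  induction n generalizing x with
  | zero => simp only [PstepS]; split <;> positivity
  | succ n ih => rw [PstepS_succ]; exact transfer_nonneg ih x

lemma sum_PstepS (n : ℕ) (s₀ : S) : ∑ x, PstepS P π n s₀ x = 1 := by
  induction n with
  | zero => simp [PstepS, Fintype.sum_prod_type, PMF.sum_toReal_eq_one]
  | succ n ih => rw [PstepS_succ, sum_transfer, ih]

lemma PstepS_le_one (n : ℕ) (s₀ : S) (x : S × A) : PstepS P π n s₀ x ≤ 1 :=
  (single_le_sum (fun y _ => PstepS_nonneg P π n s₀ y) (mem_univ x)).trans_eq (sum_PstepS P π n s₀)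

lemma PstepS_eq_mul_sum (n : ℕ) (s₀ s : S) (a : A) :
    PstepS P π n s₀ (s, a) = (π s a).toReal * ∑ a', PstepS P π n s₀ (s, a') := by
  cases n with
  | zero => by_cases h : s = s₀ <;> simp [PstepS, h, PMF.sum_toReal_eq_one]
  | succ n => rw [PstepS_succ]; exact transfer_eq_mul_sum _ s a

lemma summable_mul_PstepS {c : ℕ → ℝ} (hc : Summable c) (hc0 : ∀ k, 0 ≤ c k) (m : ℕ → ℕ)
    (s₀ : S) (x : S × A) : Summable fun k => c k * PstepS P π (m k) s₀ x :=
  Summable.of_nonneg_of_le (fun k => mul_nonneg (hc0 k) (PstepS_nonneg P π _ s₀ x))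
    (fun k => mul_le_of_le_one_right (hc0 k) (PstepS_le_one P π _ s₀ x)) hc

variable {γ : ℝ} {η : ℕ → ℝ}

lemma PetaS_eq_mul_sum (hη : Summable η) (hη0 : ∀ k, 0 ≤ η k) (s₀ s : S) (a : A) :
    PetaS P π η s₀ (s, a) = (π s a).toReal * ∑ a', PetaS P π η s₀ (s, a') := by
  have hs : ∀ a', Summable fun k => η k * PstepS P π k s₀ (s, a') :=
    fun a' => summable_mul_PstepS P π hη hη0 id s₀ (s, a')
  simp only [PetaS]
  rw [← Summable.tsum_finsetSum fun a' _ => hs a',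
    ← tsum_mul_left]
  refine tsum_congr fun k => ?_
  rw [PstepS_eq_mul_sum, ← mul_sum]
  ring

lemma summable_muS_terms (hγ0 : 0 ≤ γ) (hγ1 : γ < 1) (hη : Summable η) (hη0 : ∀ k, 0 ≤ η k)
    (s₀ : S) (x : S × A) : Summable fun t => ∑' k, γ ^ t * η k * PstepS P π (t + k) s₀ x := by
  have hc : ∀ t, Summable fun k => γ ^ t * η k := fun t => hη.mul_left _
  have hc0 : ∀ t k, 0 ≤ γ ^ t * η k := fun t k => mul_nonneg (pow_nonneg hγ0 t) (hη0 k)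
  refine Summable.of_nonneg_of_le
    (fun t => tsum_nonneg fun k => mul_nonneg (hc0 t k) (PstepS_nonneg P π _ s₀ x)) (fun t => ?_)
    ((summable_geometric_of_lt_one hγ0 hγ1).mul_right (∑' k, η k))
  rw [← tsum_mul_left]
  exact (summable_mul_PstepS P π (hc t) (hc0 t) (t + ·) s₀ x).tsum_le_tsum
    (fun k => mul_le_of_le_one_right (hc0 t k) (PstepS_le_one P π _ s₀ x)) (hc t)

lemma muS_eq_PetaS_add_transfer (hγ0 : 0 ≤ γ) (hγ1 : γ < 1) (hη : Summable η)
    (hη0 : ∀ k, 0 ≤ η k) (s₀ : S) (x : S × A) :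
    muS P π γ η s₀ x = PetaS P π η s₀ x + γ * transfer P π (muS P π γ η s₀) x := by
  set g : ℕ → S × A → ℝ := fun t y => ∑' k, γ ^ t * η k * PstepS P π (t + k) s₀ y
  have hg : ∀ y, Summable fun t => g t y := summable_muS_terms P π hγ0 hγ1 hη hη0 s₀
  have hg_succ : ∀ t, g (t + 1) x = γ * transfer P π (g t) x := fun t => by
    rw [transfer_tsum fun y => summable_mul_PstepS P π (hη.mul_left _)
      (fun k => mul_nonneg (pow_nonneg hγ0 t) (hη0 k)) (t + ·) s₀ y, ← tsum_mul_left]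
    refine tsum_congr fun k => ?_
    rw [add_right_comm, PstepS_succ, transfer_const_mul, pow_succ]
    ring
  calc muS P π γ η s₀ x = ∑' t, g t x := rfl
    _ = g 0 x + ∑' t, g (t + 1) x := (hg x).tsum_eq_zero_add
    _ = PetaS P π η s₀ x + γ * transfer P π (muS P π γ η s₀) x := by
      rw [tsum_congr hg_succ, tsum_mul_left, ← transfer_tsum hg]
      congr 1
      simp [g, PetaS]

end Occupancy

theorem stmt7_general {S A : Type*} [Fintype S] [Fintype A]
    (P : S × A → PMF S) (π : S → PMF A) (γ : ℝ) (hγ : γ ∈ Set.Ioo (0 : ℝ) 1)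
    (η : ℕ → ℝ) (hη0 : ∀ k, 0 ≤ η k) (hη1 : ∑' k, η k = 1)
    (f : S → S × A → ℝ)
    (hflow : ∀ (s₀ s : S) (a : A),
      f s₀ (s, a) =
        (π s a).toReal * ((∑ a' : A, PetaS P π η s₀ (s, a')) +
          γ * ∑ y : S × A, f s₀ y * (P y s).toReal)) :
    ∀ (s₀ : S) (x : S × A), f s₀ x = muS P π γ η s₀ x := by
  obtain ⟨hγ0, hγ1⟩ := hγ
  have hη : Summable η := by
    by_contra h
    simp [tsum_eq_zero_of_not_summable h] at hη1
  intro s₀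
  refine congrFun (eq_of_flow (abs_lt.mpr ⟨by linarith, hγ1⟩)
    (fun s => ∑ a', PetaS P π η s₀ (s, a')) (hflow s₀) fun s a => ?_)
  rw [muS_eq_PetaS_add_transfer P π hγ0.le hγ1 hη hη0, PetaS_eq_mul_sum P π hη hη0, transfer]
  ring

theorem stmt7 {S A : Type*} [Fintype S] [Fintype A] [Nonempty S] [Nonempty A]
    (P : S × A → PMF S) (π : S → PMF A) (γ : ℝ) (hγ : γ ∈ Set.Ioo (0 : ℝ) 1)
    (η : ℕ → ℝ) (hη0 : ∀ k, 0 ≤ η k) (hη1 : ∑' k, η k = 1)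
    (f : S → S × A → ℝ) (hf0 : ∀ s₀ x, 0 ≤ f s₀ x)
    (hflow : ∀ (s₀ s : S) (a : A),
      f s₀ (s, a) =
        (π s a).toReal * ((∑ a' : A, PetaS P π η s₀ (s, a')) +
          γ * ∑ y : S × A, f s₀ y * (P y s).toReal)) :
    ∀ (s₀ : S) (x : S × A), f s₀ x = muS P π γ η s₀ x :=
  stmt7_general P π γ hγ η hη0 hη1 f hflow
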